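/- Let p be an odd prime and n ≥ 2 an integer. For every integer a with gcd(a, p) = 1 and every integer b with p | b, one has Kl(a, b; p^n) = 0. -/

import Mathlib

/-- `e_q(t) = exp(2πi t / q)`. -/
noncomputable def eI (q : ℕ) (t : ℤ) : ℂ :=
  Complex.exp (2 * Real.pi * Complex.I * (t : ℂ) / (q : ℂ))

/-- The Kloosterman sum `Kl(a,b;q) = ∑_{x mod q, (x,q)=1} e_q(a x̄ + b x)`. -/
noncomputable def Kl (a b : ℤ) (q : ℕ) : ℂ :=
  ∑ x ∈ Finset.range q, if Nat.gcd x q = 1 then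
    eI q (a * (((x : ZMod q)⁻¹).val : ℤ) + b * (x : ℤ)) else 0

/-!
Multiplying the summation variable by the unit `1 + ε t`, where `ε = p^(n-1)` satisfies `ε² = 0`
and `b ε = 0` in `ZMod (p^n)`, changes the phase `a x⁻¹ + b x` by exactly `-a x⁻¹ ε t`.
Averaging over all `t` turns the Kloosterman sum into a multiple of a complete sum of the
nontrivial additive character `t ↦ ψ(-a x⁻¹ ε t)`, which vanishes.
-/

open Finset

section KloostermanSum

variable {R K : Type*} [CommRing R] [Fintype R] [DecidableEq R] [CommRing K]

def kloostermanSum (ψ : AddChar R K) (a b : R) : K :=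
  ∑ x : Rˣ, ψ (a * ↑x⁻¹ + b * x)

theorem kloostermanSum_eq_sum_mul_of_mul_self_eq_zero (ψ : AddChar R K) {a b ε : R}
    (hε : ε * ε = 0) (hb : b * ε = 0) (t : R) :
    kloostermanSum ψ a b =
      ∑ x : Rˣ, ψ (a * ↑x⁻¹ + b * x) * ψ (t * -(a * ↑x⁻¹ * ε)) := by
  let u : Rˣ := ⟨1 + ε * t, 1 - ε * t, by linear_combination -(t * t) * hε,
    by linear_combination -(t * t) * hε⟩
  rw [kloostermanSum, ← Equiv.sum_comp (Equiv.mulLeft u)]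
  refine sum_congr rfl fun x _ => ?_
  rw [← AddChar.map_add_eq_mul]
  congr 1
  simp only [Equiv.coe_mulLeft, mul_inv_rev, Units.val_mul, u, Units.inv_mk]
  linear_combination (t * x) * hb

theorem kloostermanSum_eq_zero [IsDomain K] [CharZero K] {ψ : AddChar R K}
    (hψ : ψ.IsPrimitive) {a b ε : R} (hε : ε * ε = 0) (hb : b * ε = 0) (ha : a * ε ≠ 0) :
    kloostermanSum ψ a b = 0 := by
  have hshift : ∀ x : Rˣ, -(a * ↑x⁻¹ * ε) ≠ 0 := fun x h => ha <| by
    linear_combination -(x : R) * h - a * ε * x.inv_mul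
  have hcard : (Fintype.card R : K) * kloostermanSum ψ a b = 0 := by
    calc (Fintype.card R : K) * kloostermanSum ψ a b
        = ∑ t : R, ∑ x : Rˣ, ψ (a * ↑x⁻¹ + b * x) * ψ (t * -(a * ↑x⁻¹ * ε)) := by
          simp only [← kloostermanSum_eq_sum_mul_of_mul_self_eq_zero ψ hε hb, sum_const,
            card_univ, nsmul_eq_mul]
      _ = ∑ x : Rˣ, ψ (a * ↑x⁻¹ + b * x) * ∑ t : R, ψ (t * -(a * ↑x⁻¹ * ε)) := by
          rw [sum_comm]
          simp only [mul_sum]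
      _ = 0 := by
          simp only [AddChar.sum_mulShift _ hψ, hshift, if_false, Nat.cast_zero, mul_zero,
            sum_const_zero]
  exact (mul_eq_zero.mp hcard).resolve_left (Nat.cast_ne_zero.mpr Fintype.card_ne_zero)

end KloostermanSum

theorem eI_eq_stdAddChar (q : ℕ) [NeZero q] (t : ℤ) : eI q t = ZMod.stdAddChar (t : ZMod q) :=
  (ZMod.stdAddChar_coe t).symm

theorem Kl_eq_kloostermanSum (a b : ℤ) (q : ℕ) [NeZero q] :
    Kl a b q = kloostermanSum ZMod.stdAddChar (a : ZMod q) b := by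
  rw [Kl, ← sum_filter, kloostermanSum]
  refine sum_bij' (fun x hx => ZMod.unitOfCoprime x (mem_filter.mp hx).2)
    (fun u _ => (u : ZMod q).val) (fun _ _ => mem_univ _) (fun u _ => ?_) (fun x hx => ?_)
    (fun u _ => ?_) (fun x _ => ?_)
  · exact mem_filter.mpr ⟨mem_range.mpr (ZMod.val_lt _), ZMod.val_coe_unit_coprime u⟩
  · exact ZMod.val_cast_of_lt (mem_range.mp (mem_filter.mp hx).1)
  · exact Units.ext (ZMod.natCast_zmod_val _)
  · rw [eI_eq_stdAddChar]
    push_cast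
    rw [ZMod.natCast_zmod_val, ← ZMod.inv_coe_unit, ZMod.coe_unitOfCoprime]

namespace ZMod

variable {p n : ℕ}

theorem natCast_pow_pred_mul_self_eq_zero (hn : 2 ≤ n) :
    (p : ZMod (p ^ n)) ^ (n - 1) * (p : ZMod (p ^ n)) ^ (n - 1) = 0 := by
  rw [← pow_add, ← Nat.cast_pow]
  exact (natCast_eq_zero_iff _ _).mpr (pow_dvd_pow p (by omega))

theorem intCast_mul_natCast_pow_pred_eq_zero {b : ℤ} (hb : (p : ℤ) ∣ b) (hn : n ≠ 0) :
    (b : ZMod (p ^ n)) * (p : ZMod (p ^ n)) ^ (n - 1) = 0 := by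
  obtain ⟨c, rfl⟩ := hb
  rw [Int.cast_mul, Int.cast_natCast, mul_comm, ← mul_assoc, ← pow_succ,
    Nat.sub_add_cancel (Nat.one_le_iff_ne_zero.mpr hn), ← Nat.cast_pow, natCast_self, zero_mul]

theorem intCast_mul_natCast_pow_pred_ne_zero (hp : p ≠ 0) (hn : n ≠ 0) {a : ℤ}
    (ha : ¬ (p : ℤ) ∣ a) : (a : ZMod (p ^ n)) * (p : ZMod (p ^ n)) ^ (n - 1) ≠ 0 := by
  intro h
  have hdvd : (p : ℤ) ^ (n - 1) * p ∣ (p : ℤ) ^ (n - 1) * a := by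
    rw [← pow_succ, Nat.sub_add_cancel (Nat.one_le_iff_ne_zero.mpr hn), mul_comm]
    exact_mod_cast (intCast_zmod_eq_zero_iff_dvd _ _).mp (by push_cast; exact h)
  exact ha ((mul_dvd_mul_iff_left (pow_ne_zero _ (by exact_mod_cast hp))).mp hdvd)

end ZMod

theorem stmt4_general (p : ℕ) (hp : p.Prime) (n : ℕ) (hn : 2 ≤ n)
    (a : ℤ) (ha : Int.gcd a p = 1) (b : ℤ) (hb : (p : ℤ) ∣ b) :
    Kl a b (p ^ n) = 0 := by
  have : NeZero (p ^ n) := ⟨pow_ne_zero _ hp.ne_zero⟩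
  have hpa : ¬ (p : ℤ) ∣ a := fun h =>
    hp.one_lt.ne' (Nat.Coprime.eq_one_of_dvd (Nat.Coprime.symm ha) (Int.natCast_dvd.mp h))
  rw [Kl_eq_kloostermanSum]
  exact kloostermanSum_eq_zero (ZMod.isPrimitive_stdAddChar _)
    (ZMod.natCast_pow_pred_mul_self_eq_zero hn)
    (ZMod.intCast_mul_natCast_pow_pred_eq_zero hb (by omega))
    (ZMod.intCast_mul_natCast_pow_pred_ne_zero hp.ne_zero (by omega) hpa)

theorem stmt4 (p : ℕ) (hp : p.Prime) (hodd : p ≠ 2) (n : ℕ) (hn : 2 ≤ n)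
    (a : ℤ) (ha : Int.gcd a p = 1) (b : ℤ) (hb : (p : ℤ) ∣ b) :
    Kl a b (p ^ n) = 0 :=
  stmt4_general p hp n hn a ha b hb
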